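/- Let k be a field and (A,C)_ψ an entwining structure with C finite dimensional. If φ : C* → C is a right C-comodule isomorphism compatible with ψ (ψ∘(φ⊗A)∘ψ̄ = A⊗φ), then the bilinear form [ξ,ξ'] := ⟨φ(ξ'), ξ⟩ on C* is non-degenerate and associative: [ξξ', ξ''] = [ξ, ξ'ξ''] for all ξ,ξ',ξ'' ∈ C*. -/

import Mathlib

open TensorProduct LinearMap

noncomputable section

variable (k A C : Type*) [CommRing k] [Ring A] [Algebra k A]
  [AddCommGroup C] [Module k C] [Coalgebra k C]

/-- An entwining structure `(A,C)_ψ` over `k`. -/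
structure Entwining where
  psi : C ⊗[k] A →ₗ[k] A ⊗[k] C
  mul_compat :
    psi ∘ₗ lTensor C (LinearMap.mul' k A)
      = rTensor C (LinearMap.mul' k A)
        ∘ₗ (TensorProduct.assoc k A A C).symm.toLinearMap
        ∘ₗ lTensor A psi
        ∘ₗ (TensorProduct.assoc k A C A).toLinearMap
        ∘ₗ rTensor A psi
        ∘ₗ (TensorProduct.assoc k C A A).symm.toLinearMap
  one_compat : ∀ c : C, psi (c ⊗ₜ[k] (1 : A)) = (1 : A) ⊗ₜ[k] c
  comul_compat :
    lTensor A (Coalgebra.comul (R := k) (A := C)) ∘ₗ psi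
      = (TensorProduct.assoc k A C C).toLinearMap
        ∘ₗ rTensor C psi
        ∘ₗ (TensorProduct.assoc k C A C).symm.toLinearMap
        ∘ₗ lTensor C psi
        ∘ₗ (TensorProduct.assoc k C C A).toLinearMap
        ∘ₗ rTensor A (Coalgebra.comul (R := k) (A := C))
  counit_compat : ∀ (c : C) (a : A),
    (TensorProduct.rid k A)
        ((lTensor A (Coalgebra.counit (R := k) (A := C))) (psi (c ⊗ₜ[k] a)))
      = Coalgebra.counit (R := k) c • a

variable {k A C} in
/-- Evaluation of the first (dual) factor at `c`: `ξ ⊗ a ↦ ξ(c) • a`. -/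
def evFst (c : C) : Module.Dual k C ⊗[k] A →ₗ[k] A :=
  TensorProduct.lift ((LinearMap.lsmul k A) ∘ₗ
    (LinearMap.applyₗ (R := k) c : (C →ₗ[k] k) →ₗ[k] k))

variable {k A C} in
/-- Evaluation of the second (coalgebra) factor against `ξ`: `a ⊗ c ↦ ξ(c) • a`. -/
def evSnd (ξ : Module.Dual k C) : A ⊗[k] C →ₗ[k] A :=
  (TensorProduct.rid k A).toLinearMap ∘ₗ lTensor A ξ

variable {k A C} in
/-- `ψ̄ : A ⊗ C* → C* ⊗ A` is a factorisation map for the entwining `ψ`: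
`⟨c^α, ξ⟩ a_α = ξ_i(c) a^i`. -/
def IsFactorisation (E : Entwining k A C)
    (ψbar : A ⊗[k] Module.Dual k C →ₗ[k] Module.Dual k C ⊗[k] A) : Prop :=
  ∀ (a : A) (ξ : Module.Dual k C) (c : C),
    evFst c (ψbar (a ⊗ₜ[k] ξ)) = evSnd ξ (E.psi (c ⊗ₜ[k] a))

/-- The product of `B = C^{*op}`, i.e. the opposite convolution product:
`⟨c, b b'⟩ = ⟨c₍₂₎, b⟩ ⟨c₍₁₎, b'⟩`, as a linear map `B ⊗ B →ₗ B`. -/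
def opConv : Module.Dual k C ⊗[k] Module.Dual k C →ₗ[k] Module.Dual k C :=
  ((LinearMap.llcomp k C (C ⊗[k] C) k).flip (Coalgebra.comul (R := k) (A := C)))
  ∘ₗ (LinearMap.llcomp k (C ⊗[k] C) (k ⊗[k] k) k (LinearMap.mul' k k))
  ∘ₗ TensorProduct.homTensorHomMap (σ₁₂ := RingHom.id k) (M := C) (N := C) (M₂ := k) (N₂ := k)
  ∘ₗ (TensorProduct.comm k (Module.Dual k C) (Module.Dual k C)).toLinearMap

variable {k A C} in
/-- The multiplication of the smash product `B #_ψ̄ A` on `B ⊗ A`, `B = C^{*op}`: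
`(b ⊗ a)(b' ⊗ a') = b ψ̄(a ⊗ b') a'`. -/
def smashMul (ψbar : A ⊗[k] Module.Dual k C →ₗ[k] Module.Dual k C ⊗[k] A) :
    (Module.Dual k C ⊗[k] A) ⊗[k] (Module.Dual k C ⊗[k] A) →ₗ[k]
      Module.Dual k C ⊗[k] A :=
  rTensor A (opConv k C)
  ∘ₗ (TensorProduct.assoc k (Module.Dual k C) (Module.Dual k C) A).symm.toLinearMap
  ∘ₗ lTensor (Module.Dual k C) (lTensor (Module.Dual k C) (LinearMap.mul' k A))
  ∘ₗ lTensor (Module.Dual k C) (TensorProduct.assoc k (Module.Dual k C) A A).toLinearMap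
  ∘ₗ lTensor (Module.Dual k C) (rTensor A ψbar)
  ∘ₗ lTensor (Module.Dual k C) (TensorProduct.assoc k A (Module.Dual k C) A).symm.toLinearMap
  ∘ₗ (TensorProduct.assoc k (Module.Dual k C) A (Module.Dual k C ⊗[k] A)).toLinearMap

/-- The unit `ε ⊗ 1_A` of the smash product. -/
def smashOne : Module.Dual k C ⊗[k] A :=
  (Coalgebra.counit (R := k) (A := C)) ⊗ₜ[k] (1 : A)

variable {k C} in
/-- `φ_e : C* → C`, `ξ ↦ ξ ⇀ e = e₍₁₎ ⟨e₍₂₎, ξ⟩`. -/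
def phiMap (e : C) : Module.Dual k C →ₗ[k] C :=
  (((LinearMap.llcomp k (C ⊗[k] C) (C ⊗[k] k) C
      (TensorProduct.rid k C).toLinearMap)
    ∘ₗ (LinearMap.lTensorHom C)).flip) (Coalgebra.comul (R := k) e)

variable {k C} in
/-- `ξ ↦ e ↼ ξ = ⟨e₍₁₎, ξ⟩ e₍₂₎`. -/
def rarrowMap (e : C) : Module.Dual k C →ₗ[k] C :=
  (((LinearMap.llcomp k (C ⊗[k] C) (k ⊗[k] C) C
      (TensorProduct.lid k C).toLinearMap)
    ∘ₗ (LinearMap.rTensorHom C)).flip) (Coalgebra.comul (R := k) e)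

variable {k C} in
/-- The (standard) convolution product on `C*`: `(ξ ξ')(c) = ξ(c₍₁₎) ξ'(c₍₂₎)`. -/
def conv (ξ ξ' : Module.Dual k C) : Module.Dual k C :=
  (LinearMap.mul' k k) ∘ₗ TensorProduct.map ξ ξ' ∘ₗ Coalgebra.comul (R := k)

variable {k C} in
/-- `coactD` is the right `C`-coaction on `C*` determined by
`ξ₍₀₎ ⟨ξ₍₁₎, ξ'⟩ = ξ' ξ`. -/
def IsDualCoaction (coactD : Module.Dual k C →ₗ[k] Module.Dual k C ⊗[k] C) :
    Prop :=
  ∀ ξ ξ' : Module.Dual k C,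
    (TensorProduct.rid k (Module.Dual k C))
        ((lTensor (Module.Dual k C) ξ') (coactD ξ))
      = conv ξ' ξ

/-!
Colinearity of `φ` rewrites the coproduct of `φ ξ''` as `φ` applied to the coaction of `ξ''`, and
pairing the coaction with `ξ'` is convolution by `ξ'`; this is associativity. Non-degeneracy in the
first argument is surjectivity of `φ`, and in the second it is injectivity of `φ`, since the dual of
a vector space separates its points.
-/

theorem mul'_map_rTensor_apply {R M N : Type*} [CommRing R] [AddCommGroup M] [Module R M]
    [AddCommGroup N] [Module R N] (ξ ξ' : Module.Dual R N) (f : M →ₗ[R] N) (t : M ⊗[R] N) :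
    mul' R R (map ξ ξ' (rTensor N f t)) = ξ (f (TensorProduct.rid R M (lTensor M ξ' t))) := by
  induction t using TensorProduct.induction_on with
  | zero => simp
  | tmul m n => simp [mul_comm]
  | add x y hx hy => simp only [map_add, hx, hy]

theorem conv_apply_of_comul_comp_eq {R M D : Type*} [CommRing R] [AddCommGroup M] [Module R M]
    [AddCommGroup D] [Module R D] [Coalgebra R D] {f : M →ₗ[R] D} {ρ : M →ₗ[R] M ⊗[R] D}
    (hf : Coalgebra.comul ∘ₗ f = rTensor D f ∘ₗ ρ) (ξ ξ' : Module.Dual R D) (m : M) :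
    conv ξ ξ' (f m) = ξ (f (TensorProduct.rid R M (lTensor M ξ' (ρ m)))) := by
  rw [← mul'_map_rTensor_apply, ← LinearMap.comp_apply (rTensor D f), ← hf]
  rfl

theorem comodule_iso_gives_frobenius_form
    {k C A : Type*} [Field k]
    [AddCommGroup C] [Module k C] [Coalgebra k C]
    (coactD : Module.Dual k C →ₗ[k] Module.Dual k C ⊗[k] C)
    (hcoactD : IsDualCoaction coactD)
    (φ : Module.Dual k C →ₗ[k] C)
    (hbij : Function.Bijective φ)
    (hcolin : (Coalgebra.comul (R := k) (A := C)) ∘ₗ φ = rTensor C φ ∘ₗ coactD) :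
    -- the form `[ξ,ξ'] := ⟨φ(ξ'), ξ⟩` is associative:
    (∀ ξ ξ' ξ'' : Module.Dual k C,
      (conv ξ ξ') (φ ξ'') = ξ (φ (conv ξ' ξ''))) ∧
    -- and non-degenerate:
    (∀ ξ : Module.Dual k C, (∀ ξ' : Module.Dual k C, ξ (φ ξ') = 0) → ξ = 0) ∧
    (∀ ξ' : Module.Dual k C, (∀ ξ : Module.Dual k C, ξ (φ ξ') = 0) → ξ' = 0) := by
  refine ⟨fun ξ ξ' ξ'' => ?_, fun ξ h => ?_, fun ξ' h => ?_⟩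
  · rw [conv_apply_of_comul_comp_eq hcolin, hcoactD]
  · ext c
    obtain ⟨ξ', rfl⟩ := hbij.surjective c
    exact h ξ'
  · apply hbij.injective
    rw [map_zero]
    exact (Module.forall_dual_apply_eq_zero_iff k (φ ξ')).mp h
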